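/- arXiv:1601.00397 — 5 statements merged into one kernel-verified Lean document; each statement's English description precedes it below -/
import Mathlib

section
/- The function t ↦ Σ_{i=0}^∞ f_{W_ℓ}(t + iΔ), where f_{W_ℓ} is the Erlang(ℓ, ω) density, converges pointwise on [0, Δ) to the constant 1/Δ as ℓ → ∞. -/
/-!
Sampling an integrable `f ≥ 0` on the grid `t + ℕΔ` and comparing `f` on each cell with its value
at the left endpoint gives `|∫_t^∞ f - Δ ∑ᵢ f (t + iΔ)| ≤ Δ ∫ |f'|`; when `f 0 = 0` the missing
piece `∫_0^t f` is at most `Δ sup f ≤ Δ ∫ |f'|` as well. For the Erlang densities `f_n`,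
`f_{n+1}' = ω (f_n - f_{n+1})` and `f_n - f_{n+1} = f_n (1 - ωx/(n+1))`, so `∫ |f_{n+1}'|` is `ω`
times the mean absolute deviation of `ωX/(n+1)`, `X ~ f_n`, which by Cauchy–Schwarz is at most its
standard deviation `1/√(n+1)`. Hence the wrapped sum is within `2ω/√(n+1)` of `1/Δ`.
-/

open Real Filter Topology MeasureTheory Set
open scoped Nat

section RiemannSum

variable {f f' : ℝ → ℝ} {a b t Δ : ℝ}

theorem abs_sub_le_integral_abs_deriv (hab : a ≤ b) (hf : ∀ x ∈ Icc a b, HasDerivAt f (f' x) x)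
    (hf' : IntervalIntegrable f' volume a b) : |f b - f a| ≤ ∫ x in a..b, |f' x| := by
  rw [← intervalIntegral.integral_eq_sub_of_hasDerivAt (by rwa [uIcc_of_le hab]) hf']
  exact intervalIntegral.abs_integral_le_integral_abs hab

theorem abs_integral_sub_mul_le (hab : a ≤ b) (hf : ∀ x ∈ Icc a b, HasDerivAt f (f' x) x)
    (hf' : IntervalIntegrable f' volume a b) :
    |(∫ x in a..b, f x) - (b - a) * f a| ≤ (b - a) * ∫ x in a..b, |f' x| := by
  have hcont : ContinuousOn f (Icc a b) := fun x hx => (hf x hx).continuousAt.continuousWithinAt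
  have hosc : ∀ x ∈ Icc a b, |f x - f a| ≤ ∫ y in a..b, |f' y| := fun x hx =>
    (abs_sub_le_integral_abs_deriv hx.1 (fun y hy => hf y ⟨hy.1, hy.2.trans hx.2⟩)
        (hf'.mono_set (uIcc_subset_uIcc_left (by rwa [uIcc_of_le hab])))).trans
      (intervalIntegral.integral_mono_interval le_rfl hx.1 hx.2
        (ae_of_all _ fun _ => abs_nonneg _) hf'.abs)
  calc |(∫ x in a..b, f x) - (b - a) * f a| = |∫ x in a..b, (f x - f a)| := by
        rw [intervalIntegral.integral_sub (hcont.intervalIntegrable_of_Icc hab)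
          intervalIntegrable_const, intervalIntegral.integral_const, smul_eq_mul]
    _ ≤ ∫ x in a..b, |f x - f a| := intervalIntegral.abs_integral_le_integral_abs hab
    _ ≤ ∫ _ in a..b, ∫ y in a..b, |f' y| :=
        intervalIntegral.integral_mono_on hab
          ((hcont.sub continuousOn_const).abs.intervalIntegrable_of_Icc hab)
          intervalIntegrable_const hosc
    _ = (b - a) * ∫ x in a..b, |f' x| := by rw [intervalIntegral.integral_const, smul_eq_mul]

theorem MeasureTheory.IntegrableOn.intervalIntegrable_of_Ioi {g : ℝ → ℝ}
    (hg : IntegrableOn g (Ioi t)) (ha : t ≤ a) (hb : t ≤ b) : IntervalIntegrable g volume a b :=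
  intervalIntegrable_iff.2 (hg.mono_set fun _ hx => lt_of_le_of_lt (le_min ha hb) hx.1)

theorem intervalIntegral_le_integral_Ioi {g : ℝ → ℝ} (hg : IntegrableOn g (Ioi t))
    (hg0 : ∀ x ∈ Ioi t, 0 ≤ g x) (hb : t ≤ b) : ∫ x in t..b, g x ≤ ∫ x in Ioi t, g x := by
  rw [intervalIntegral.integral_of_le hb]
  exact setIntegral_mono_set hg ((ae_restrict_iff' measurableSet_Ioi).2 (ae_of_all _ hg0))
    Ioc_subset_Ioi_self.eventuallyLE

theorem abs_intervalIntegral_sub_sum_range_le (hΔ : 0 ≤ Δ)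
    (hf : ∀ x ∈ Ici t, HasDerivAt f (f' x) x) (hf' : IntegrableOn f' (Ioi t)) (N : ℕ) :
    |(∫ x in t..t + N * Δ, f x) - Δ * ∑ i ∈ Finset.range N, f (t + i * Δ)| ≤
      Δ * ∫ x in t..t + N * Δ, |f' x| := by
  have hcont : ContinuousOn f (Ici t) := fun x hx => (hf x hx).continuousAt.continuousWithinAt
  have hle : ∀ k : ℕ, t ≤ t + k * Δ := fun k => le_add_of_nonneg_right (by positivity)
  have hint : ∀ a b, t ≤ a → t ≤ b → IntervalIntegrable f volume a b := fun a b ha hb =>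
    (hcont.mono fun _ hx => (le_min ha hb).trans hx.1).intervalIntegrable
  induction N with
  | zero => simp
  | succ N ih =>
    set c := t + N * Δ
    have hc : t + (N + 1 : ℕ) * Δ = c + Δ := by push_cast; ring
    have hstep := abs_integral_sub_mul_le (f := f) (a := c) (b := c + Δ)
      (le_add_of_nonneg_right hΔ) (fun x hx => hf x ((hle N).trans hx.1))
      (hf'.intervalIntegrable_of_Ioi (hle N) ((hle N).trans (le_add_of_nonneg_right hΔ)))
    rw [add_sub_cancel_left] at hstep
    have hc' : t ≤ c + Δ := hc ▸ hle (N + 1)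
    rw [hc, ← intervalIntegral.integral_add_adjacent_intervals (hint _ _ le_rfl (hle N))
        (hint _ _ (hle N) hc'),
      ← intervalIntegral.integral_add_adjacent_intervals
        (hf'.intervalIntegrable_of_Ioi le_rfl (hle N)).abs
        (hf'.intervalIntegrable_of_Ioi (hle N) hc').abs, Finset.sum_range_succ]
    calc _ = |((∫ x in t..c, f x) - Δ * ∑ i ∈ Finset.range N, f (t + i * Δ)) +
          ((∫ x in c..c + Δ, f x) - Δ * f c)| := by congr 1; ring
      _ ≤ _ := abs_add_le _ _
      _ ≤ _ := add_le_add ih hstep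
      _ = _ := by ring

theorem summable_of_integrableOn_Ioi (hΔ : 0 < Δ)
    (hf : ∀ x ∈ Ici t, HasDerivAt f (f' x) x) (hf' : IntegrableOn f' (Ioi t))
    (hfi : IntegrableOn f (Ioi t)) (hf0 : ∀ x ∈ Ici t, 0 ≤ f x) :
    Summable fun i : ℕ => f (t + i * Δ) := by
  have hle : ∀ k : ℕ, t ≤ t + k * Δ := fun k => le_add_of_nonneg_right (by positivity)
  refine summable_of_sum_range_le (c := (∫ x in Ioi t, f x) / Δ + ∫ x in Ioi t, |f' x|)
    (fun i => hf0 _ (hle i)) fun N => ?_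
  have hbound := abs_le.1 (abs_intervalIntegral_sub_sum_range_le hΔ.le hf hf' N)
  have hI := intervalIntegral_le_integral_Ioi hfi (fun x hx => hf0 x (Ioi_subset_Ici_self hx))
    (hle N)
  have hJ := intervalIntegral_le_integral_Ioi hf'.abs (fun x _ => abs_nonneg (f' x)) (hle N)
  rw [div_add' _ _ _ hΔ.ne', le_div_iff₀ hΔ]
  nlinarith

theorem abs_integral_Ioi_sub_tsum_le (hΔ : 0 < Δ)
    (hf : ∀ x ∈ Ici t, HasDerivAt f (f' x) x) (hf' : IntegrableOn f' (Ioi t))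
    (hfi : IntegrableOn f (Ioi t)) (hf0 : ∀ x ∈ Ici t, 0 ≤ f x) :
    |(∫ x in Ioi t, f x) - Δ * ∑' i : ℕ, f (t + i * Δ)| ≤ Δ * ∫ x in Ioi t, |f' x| := by
  have hlim : Tendsto (fun N : ℕ => t + N * Δ) atTop atTop :=
    tendsto_atTop_add_const_left _ t (tendsto_natCast_atTop_atTop.atTop_mul_const hΔ)
  have hsum := (summable_of_integrableOn_Ioi hΔ hf hf' hfi hf0).hasSum.tendsto_sum_nat
  refine le_of_tendsto ((intervalIntegral_tendsto_integral_Ioi t hfi hlim).sub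
    (hsum.const_mul Δ)).abs (Eventually.of_forall fun N => ?_)
  refine (abs_intervalIntegral_sub_sum_range_le hΔ.le hf hf' N).trans ?_
  gcongr
  exact intervalIntegral_le_integral_Ioi hf'.abs (fun x _ => abs_nonneg (f' x))
    (le_add_of_nonneg_right (by positivity))

theorem abs_mul_tsum_sub_integral_le (hΔ : 0 < Δ) (ht : 0 ≤ t) (htΔ : t ≤ Δ)
    (hf : ∀ x ∈ Ici 0, HasDerivAt f (f' x) x) (hf' : IntegrableOn f' (Ioi 0))
    (hfi : IntegrableOn f (Ioi 0)) (hf0 : ∀ x ∈ Ici 0, 0 ≤ f x) (hfz : f 0 = 0) :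
    |Δ * ∑' i : ℕ, f (t + i * Δ) - ∫ x in Ioi 0, f x| ≤ 2 * Δ * ∫ x in Ioi 0, |f' x| := by
  set V := ∫ x in Ioi 0, |f' x|
  have hsplit : ∫ x in Ioi 0, f x = (∫ x in (0 : ℝ)..t, f x) + ∫ x in Ioi t, f x := by
    rw [intervalIntegral.integral_of_le ht, ← setIntegral_union (Ioc_disjoint_Ioi le_rfl)
      measurableSet_Ioi (hfi.mono_set Ioc_subset_Ioi_self) (hfi.mono_set (Ioi_subset_Ioi ht)),
      Ioc_union_Ioi_eq_Ioi ht]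
  have hsup : ∀ x ∈ Icc 0 t, f x ≤ V := fun x hx => by
    have := abs_sub_le_integral_abs_deriv hx.1 (fun y hy => hf y hy.1)
      (hf'.intervalIntegrable_of_Ioi le_rfl hx.1)
    rw [hfz, sub_zero, abs_of_nonneg (hf0 x hx.1)] at this
    exact this.trans
      (intervalIntegral_le_integral_Ioi hf'.abs (fun y _ => abs_nonneg (f' y)) hx.1)
  have hhead : ∫ x in (0 : ℝ)..t, f x ≤ Δ * V := by
    calc ∫ x in (0 : ℝ)..t, f x ≤ ∫ _ in (0 : ℝ)..t, V :=
          intervalIntegral.integral_mono_on ht (hfi.intervalIntegrable_of_Ioi le_rfl ht)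
            intervalIntegrable_const hsup
      _ = t * V := by rw [intervalIntegral.integral_const, smul_eq_mul, sub_zero]
      _ ≤ Δ * V := mul_le_mul_of_nonneg_right htΔ (integral_nonneg fun x => abs_nonneg _)
  have hhead0 : 0 ≤ ∫ x in (0 : ℝ)..t, f x :=
    intervalIntegral.integral_nonneg ht fun x hx => hf0 x hx.1
  have htail := abs_le.1 <| (abs_integral_Ioi_sub_tsum_le hΔ (fun x hx => hf x (ht.trans hx))
    (hf'.mono_set (Ioi_subset_Ioi ht)) (hfi.mono_set (Ioi_subset_Ioi ht))
    fun x hx => hf0 x (ht.trans hx)).trans (mul_le_mul_of_nonneg_left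
      (setIntegral_mono_set hf'.abs (ae_of_all _ fun x => abs_nonneg (f' x))
        (Ioi_subset_Ioi ht).eventuallyLE) hΔ.le)
  rw [hsplit, abs_le]
  constructor <;> linarith

end RiemannSum

/-- The Erlang density of shape `n + 1` (not `n`) and rate `ω`, extended polynomially to `x < 0`. -/
noncomputable def erlangDensity (ω : ℝ) (n : ℕ) (x : ℝ) : ℝ :=
  ω ^ (n + 1) * x ^ n * exp (-ω * x) / n !

section Erlang

variable {ω : ℝ} {n : ℕ}

theorem integral_pow_mul_exp_neg_mul_Ioi (hω : 0 < ω) (k : ℕ) :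
    ∫ x in Ioi (0 : ℝ), x ^ k * exp (-ω * x) = k ! / ω ^ (k + 1) := by
  have h := integral_rpow_mul_exp_neg_mul_Ioi (a := (k : ℝ) + 1) (by positivity) hω
  rw [add_sub_cancel_right] at h
  simp only [rpow_natCast, neg_mul] at h ⊢
  rw [h, Gamma_nat_eq_factorial, ← Nat.cast_succ, rpow_natCast, div_pow, one_pow,
    one_div_mul_eq_div]

theorem erlangDensity_nonneg (hω : 0 ≤ ω) {x : ℝ} (hx : 0 ≤ x) : 0 ≤ erlangDensity ω n x := by
  unfold erlangDensity; positivity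

theorem erlangDensity_succ_zero : erlangDensity ω (n + 1) 0 = 0 := by
  simp [erlangDensity]

theorem erlangDensity_succ (x : ℝ) :
    erlangDensity ω (n + 1) x = ω * x / (n + 1) * erlangDensity ω n x := by
  unfold erlangDensity
  rw [Nat.factorial_succ]
  push_cast
  field_simp
  ring

theorem integral_erlangDensity (hω : 0 < ω) : ∫ x in Ioi 0, erlangDensity ω n x = 1 := by
  simp only [erlangDensity, mul_assoc, integral_div, integral_const_mul,
    integral_pow_mul_exp_neg_mul_Ioi hω]
  field_simp

theorem integrableOn_erlangDensity (hω : 0 < ω) : IntegrableOn (erlangDensity ω n) (Ioi 0) :=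
  .of_integral_ne_zero (by rw [integral_erlangDensity hω]; exact one_ne_zero)

theorem hasDerivAt_erlangDensity_succ (x : ℝ) :
    HasDerivAt (erlangDensity ω (n + 1))
      (ω * (erlangDensity ω n x - erlangDensity ω (n + 1) x)) x := by
  have hfun : erlangDensity ω (n + 1) =
      fun y => ω ^ (n + 2) * (y ^ (n + 1) * exp (-ω * y)) / (n + 1)! := by
    funext y; simp only [erlangDensity]; ring
  rw [hfun]
  refine ((((hasDerivAt_pow (n + 1) x).mul ((hasDerivAt_id' x).const_mul (-ω)).exp).const_mul
    _).div_const _).congr_deriv ?_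
  simp only [erlangDensity, Nat.factorial_succ, Nat.add_sub_cancel]
  push_cast
  field_simp
  ring

/-- AM–GM `2r|u| ≤ r² + u²` for `u = 1 - ωx/(n+1)`, multiplied by `f_n x`; the right-hand side
`f_n (r² + u²)` is expanded through `x f_k = (k+1)/ω f_{k+1}` so that it integrates to
`r² + 1/(n+1)`. -/
theorem two_mul_abs_erlangDensity_sub_succ_le {r x : ℝ} (hω : 0 ≤ ω) (hx : 0 ≤ x) :
    2 * r * |erlangDensity ω n x - erlangDensity ω (n + 1) x| ≤
      r ^ 2 * erlangDensity ω n x + (erlangDensity ω n x - 2 * erlangDensity ω (n + 1) x +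
        (n + 2) / (n + 1) * erlangDensity ω (n + 2) x) := by
  set u := 1 - ω * x / (n + 1) with hu
  have hp := erlangDensity_nonneg (n := n) hω hx
  have hdiff : erlangDensity ω n x - erlangDensity ω (n + 1) x = erlangDensity ω n x * u := by
    rw [erlangDensity_succ]; ring
  have hsq : erlangDensity ω n x - 2 * erlangDensity ω (n + 1) x +
      (n + 2) / (n + 1) * erlangDensity ω (n + 2) x = erlangDensity ω n x * u ^ 2 := by
    rw [hu, erlangDensity_succ (n := n + 1), erlangDensity_succ (n := n)]
    push_cast
    field_simp
    ring
  rw [hdiff, hsq, abs_mul, abs_of_nonneg hp]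
  nlinarith [two_mul_le_add_sq r |u|, sq_abs u]

theorem integral_abs_erlangDensity_sub_succ_le (hω : 0 < ω) :
    ∫ x in Ioi 0, |erlangDensity ω n x - erlangDensity ω (n + 1) x| ≤ 1 / √(n + 1) := by
  set r := 1 / √(n + 1)
  have hr : 0 < r := by positivity
  have hr2 : r ^ 2 = 1 / (n + 1) := by rw [div_pow, sq_sqrt (by positivity), one_pow]
  have hint (k : ℕ) := integrableOn_erlangDensity (n := k) hω
  have hmoments : ∫ x in Ioi 0, (r ^ 2 * erlangDensity ω n x + (erlangDensity ω n x -
      2 * erlangDensity ω (n + 1) x + (n + 2) / (n + 1) * erlangDensity ω (n + 2) x)) =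
      2 * r ^ 2 := by
    have h0 : IntegrableOn (fun x => r ^ 2 * erlangDensity ω n x) (Ioi 0) := (hint n).const_mul _
    have h1 : IntegrableOn (fun x => 2 * erlangDensity ω (n + 1) x) (Ioi 0) :=
      (hint (n + 1)).const_mul _
    have h2 : IntegrableOn (fun x => (n + 2) / (n + 1) * erlangDensity ω (n + 2) x) (Ioi 0) :=
      (hint (n + 2)).const_mul _
    have h01 : IntegrableOn (fun x => erlangDensity ω n x - 2 * erlangDensity ω (n + 1) x)
      (Ioi 0) := (hint n).sub h1
    have h012 : IntegrableOn (fun x => erlangDensity ω n x - 2 * erlangDensity ω (n + 1) x +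
      (n + 2) / (n + 1) * erlangDensity ω (n + 2) x) (Ioi 0) := h01.add h2
    rw [integral_add h0 h012, integral_add h01 h2, integral_sub (hint n) h1]
    simp only [integral_const_mul, integral_erlangDensity hω]
    rw [hr2]
    field_simp
    ring
  refine le_of_mul_le_mul_left ?_ (by positivity : 0 < 2 * r)
  rw [show 2 * r * r = 2 * r ^ 2 by ring, ← hmoments, ← integral_const_mul]
  exact setIntegral_mono_on (((hint n).sub (hint (n + 1))).abs.const_mul _)
    (((hint n).const_mul _).add (((hint n).sub ((hint (n + 1)).const_mul 2)).add
      ((hint (n + 2)).const_mul _))) measurableSet_Ioi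
    fun x hx => two_mul_abs_erlangDensity_sub_succ_le hω.le (le_of_lt hx)

theorem abs_tsum_erlangDensity_sub_inv_le {Δ t : ℝ} (hω : 0 < ω) (hΔ : 0 < Δ) (ht : 0 ≤ t)
    (htΔ : t ≤ Δ) (n : ℕ) :
    |∑' i : ℕ, erlangDensity ω (n + 1) (t + i * Δ) - 1 / Δ| ≤ 2 * ω / √(n + 1) := by
  have hint (k : ℕ) := integrableOn_erlangDensity (n := k) hω
  have h := abs_mul_tsum_sub_integral_le hΔ ht htΔ (fun x _ => hasDerivAt_erlangDensity_succ x)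
    (((hint n).sub (hint (n + 1))).const_mul ω) (hint (n + 1))
    (fun x hx => erlangDensity_nonneg hω.le hx) erlangDensity_succ_zero
  simp only [integral_erlangDensity hω, abs_mul, abs_of_pos hω, integral_const_mul] at h
  have hS : ∑' i : ℕ, erlangDensity ω (n + 1) (t + i * Δ) - 1 / Δ =
      (Δ * ∑' i : ℕ, erlangDensity ω (n + 1) (t + i * Δ) - 1) / Δ := by
    rw [sub_div, mul_div_cancel_left₀ _ hΔ.ne']
  rw [hS, abs_div, abs_of_pos hΔ, div_le_iff₀ hΔ]
  calc _ ≤ 2 * Δ * (ω * ∫ x in Ioi 0, |erlangDensity ω n x - erlangDensity ω (n + 1) x|) := h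
    _ ≤ 2 * Δ * (ω * (1 / √(n + 1))) := by
      gcongr
      exact integral_abs_erlangDensity_sub_succ_le hω
    _ = 2 * ω / √(n + 1) * Δ := by ring

end Erlang

/-- The function `t ↦ ∑_{i=0}^∞ f_{W_ℓ}(t + iΔ)`, where `f_{W_ℓ}` is the Erlang(ℓ, ω)
density, converges pointwise on `[0, Δ)` to the constant `1/Δ` as `ℓ → ∞`. -/
theorem erlang_wrapped_density_tendsto (ω Δ : ℝ) (hω : 0 < ω) (hΔ : 0 < Δ) :
    ∀ t ∈ Set.Ico (0 : ℝ) Δ,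
      Tendsto (fun ℓ : ℕ =>
          ∑' i : ℕ, ω ^ ℓ * (t + i * Δ) ^ (ℓ - 1) * Real.exp (-ω * (t + i * Δ)) /
            (Nat.factorial (ℓ - 1)))
        atTop (nhds (1 / Δ)) := by
  rintro t ⟨ht, htΔ⟩
  rw [← tendsto_add_atTop_iff_nat 2, tendsto_iff_dist_tendsto_zero]
  have hbound : Tendsto (fun n : ℕ => 2 * ω / √(n + 1)) atTop (𝓝 0) :=
    tendsto_const_nhds.div_atTop
      (tendsto_sqrt_atTop.comp (tendsto_atTop_add_const_right _ 1 tendsto_natCast_atTop_atTop))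
  exact squeeze_zero (fun _ => dist_nonneg)
    (fun n => abs_tsum_erlangDensity_sub_inv_le hω hΔ ht htΔ.le n) hbound
end

section
/- The download success probability p_D2D(Δ) = (1/Δ)·Σ_{i=h}^m ((1−e^{−iμΔ})/(iμ))·Π_{j=h,j≠i}^m j/(j−i) tends to 1 as Δ → 0⁺ and to 0 as Δ → ∞, for μ > 0 and integers 1 ≤ h ≤ m. -/
/-!
As `Δ → 0⁺` the factor `(1 - e^{-aΔ}) / Δ` tends to `a` (the derivative of `1 - e^{-aΔ}` at `0`),
so `p_D2D(Δ)` tends to `∑ᵢ ∏_{j ≠ i} j / (j - i)`. This is the value at `0` of the sum of the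
Lagrange basis polynomials on the nodes `h, …, m`, which is the constant `1`. As `Δ → ∞` each
numerator stays bounded while `1 / Δ → 0`.
-/

open Real Filter Finset Topology

namespace Lagrange

variable {F ι : Type*} [Field F] [DecidableEq ι] {s : Finset ι} {v : ι → F}

theorem eval_zero_basis (i : ι) :
    (Lagrange.basis s v i).eval 0 = ∏ j ∈ s.erase i, v j / (v j - v i) := by
  rw [Lagrange.basis, Polynomial.eval_prod]
  refine Finset.prod_congr rfl fun j _ => ?_
  simp only [basisDivisor, Polynomial.eval_mul, Polynomial.eval_C, Polynomial.eval_sub,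
    Polynomial.eval_X]
  rw [← neg_sub (v j) (v i), inv_neg]
  ring

theorem sum_prod_div_sub_eq_one (hvs : Set.InjOn v s) (hs : s.Nonempty) :
    ∑ i ∈ s, ∏ j ∈ s.erase i, v j / (v j - v i) = 1 := by
  simpa only [Polynomial.eval_finsetSum, eval_zero_basis, Polynomial.eval_one] using
    congrArg (Polynomial.eval 0) (sum_basis hvs hs)

end Lagrange

theorem tendsto_one_sub_exp_neg_mul_div_nhdsNE (a : ℝ) :
    Tendsto (fun Δ : ℝ => (1 - exp (-a * Δ)) / Δ) (𝓝[≠] 0) (𝓝 a) := by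
  have hderiv : HasDerivAt (fun Δ : ℝ => 1 - exp (-a * Δ)) a 0 := by
    simpa using (((hasDerivAt_id (0 : ℝ)).const_mul (-a)).exp).const_sub 1
  refine hderiv.tendsto_slope_zero.congr fun Δ => ?_
  simp [div_eq_inv_mul]

theorem tendsto_one_sub_exp_neg_mul_div_atTop {a : ℝ} (ha : 0 < a) :
    Tendsto (fun Δ : ℝ => (1 - exp (-a * Δ)) / Δ) atTop (𝓝 0) := by
  have hexp : Tendsto (fun Δ : ℝ => exp (-a * Δ)) atTop (𝓝 0) :=
    tendsto_exp_atBot.comp <| tendsto_id.const_mul_atTop_of_neg (neg_neg_of_pos ha)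
  simpa [div_eq_mul_inv] using (tendsto_const_nhds.sub hexp).mul tendsto_inv_atTop_zero

section ExpSum

variable {ι : Type*} (s : Finset ι) (a c : ι → ℝ)

theorem inv_mul_sum_one_sub_exp_eq (Δ : ℝ) :
    (1 / Δ) * ∑ i ∈ s, (1 - exp (-a i * Δ)) / a i * c i
      = ∑ i ∈ s, (1 - exp (-a i * Δ)) / Δ * (c i / a i) := by
  rw [Finset.mul_sum]
  exact Finset.sum_congr rfl fun i _ => by ring

theorem tendsto_inv_mul_sum_one_sub_exp_nhdsNE (ha : ∀ i ∈ s, a i ≠ 0) :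
    Tendsto (fun Δ : ℝ => (1 / Δ) * ∑ i ∈ s, (1 - exp (-a i * Δ)) / a i * c i)
      (𝓝[≠] 0) (𝓝 (∑ i ∈ s, c i)) := by
  simp_rw [inv_mul_sum_one_sub_exp_eq]
  refine tendsto_finsetSum s fun i hi => ?_
  have := (tendsto_one_sub_exp_neg_mul_div_nhdsNE (a i)).mul_const (c i / a i)
  rwa [mul_div_cancel₀ _ (ha i hi)] at this

theorem tendsto_inv_mul_sum_one_sub_exp_atTop (ha : ∀ i ∈ s, 0 < a i) :
    Tendsto (fun Δ : ℝ => (1 / Δ) * ∑ i ∈ s, (1 - exp (-a i * Δ)) / a i * c i)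
      atTop (𝓝 0) := by
  simp_rw [inv_mul_sum_one_sub_exp_eq]
  simpa using tendsto_finsetSum s fun i hi =>
    (tendsto_one_sub_exp_neg_mul_div_atTop (ha i hi)).mul_const (c i / a i)

end ExpSum

/-- The download success probability
`p_D2D(Δ) = (1/Δ)·∑_{i=h}^m ((1−e^{−iμΔ})/(iμ))·∏_{j≠i} j/(j−i)`
tends to `1` as `Δ → 0⁺` and to `0` as `Δ → ∞`, for `μ > 0` and integers `1 ≤ h ≤ m`. -/
theorem pD2D_limits (μ : ℝ) (hμ : 0 < μ) (h m : ℕ) (h1 : 1 ≤ h) (hhm : h ≤ m) :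
    Tendsto (fun Δ : ℝ =>
        (1 / Δ) * ∑ i ∈ Finset.Icc h m,
          (1 - Real.exp (-(i * μ) * Δ)) / (i * μ) *
            ∏ j ∈ (Finset.Icc h m).erase i, (j : ℝ) / ((j : ℝ) - (i : ℝ)))
      (nhdsWithin 0 (Set.Ioi 0)) (nhds 1) ∧
    Tendsto (fun Δ : ℝ =>
        (1 / Δ) * ∑ i ∈ Finset.Icc h m,
          (1 - Real.exp (-(i * μ) * Δ)) / (i * μ) *
            ∏ j ∈ (Finset.Icc h m).erase i, (j : ℝ) / ((j : ℝ) - (i : ℝ)))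
      atTop (nhds 0) := by
  set s := Finset.Icc h m
  set c : ℕ → ℝ := fun i => ∏ j ∈ s.erase i, (j : ℝ) / ((j : ℝ) - (i : ℝ))
  have hrate : ∀ i ∈ s, 0 < (i : ℝ) * μ := fun i hi => by
    have : (1 : ℝ) ≤ i := by exact_mod_cast h1.trans (Finset.mem_Icc.mp hi).1
    positivity
  have hweights : ∑ i ∈ s, c i = 1 :=
    Lagrange.sum_prod_div_sub_eq_one Nat.cast_injective.injOn ⟨h, Finset.mem_Icc.mpr ⟨le_rfl, hhm⟩⟩
  refine ⟨?_, tendsto_inv_mul_sum_one_sub_exp_atTop s _ c hrate⟩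
  have hsmall := tendsto_inv_mul_sum_one_sub_exp_nhdsNE s _ c fun i hi => (hrate i hi).ne'
  simpa only [hweights] using hsmall.mono_left (nhdsGT_le_nhdsNE 0)
end

section
/- The download cost C_d(Δ) = Mω(ρ_BS + (ρ_D2D·hα/F − ρ_BS)·p_D2D(Δ)), where p_D2D(Δ) = (1/Δ)Σ_{i=h}^m ((1−e^{−iμΔ})/(iμ))Π_{j=h,j≠i}^m j/(j−i), is monotonically increasing in Δ when ρ_BS/ρ_D2D > hα/F, monotonically decreasing when ρ_BS/ρ_D2D < hα/F, and constant when equality holds (for μ > 0). -/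
/-!
Write `cᵢ = ∏_{j ≠ i} j / (j - i)`, so that `p_D2D(Δ) = G(Δ) / Δ`, where `G` is the antiderivative
vanishing at `0` of `f(t) = ∑ᵢ cᵢ e^{-iμt}`. The weights are explicit,
`i cᵢ = (-1)^(i-h) h C(m,h) C(m-h,i-h)`, so by the binomial theorem
`f'(t) = -μ h C(m,h) uʰ (1-u)^(m-h)` with `u = e^{-μt} ∈ (0,1)`, and `f` is strictly decreasing.
By the mean value theorem the running average `G(Δ)/Δ` of a strictly decreasing function is
strictly decreasing. Finally `C_d = Mωρ_BS + Mωρ_D2D (hα/F - ρ_BS/ρ_D2D) p_D2D`, and the sign of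
the slope decides.
-/

open Real Finset Nat

/-- The value at `0` of the Lagrange basis polynomial of the node `i` among the nodes `s`. -/
noncomputable def lagrangeCoeff (s : Finset ℕ) (i : ℕ) : ℝ :=
  ∏ j ∈ s.erase i, (j : ℝ) / ((j : ℝ) - i)

lemma factorial_mul_prod_Icc {h : ℕ} (m : ℕ) (hh : 1 ≤ h) (hhm : h ≤ m + 1) :
    ((h - 1)! : ℝ) * ∏ j ∈ Icc h m, (j : ℝ) = m ! := by
  obtain ⟨a, rfl⟩ : ∃ a, h = a + 1 := ⟨h - 1, by omega⟩
  rw [Nat.add_sub_cancel, ← prod_Ico_id_eq_factorial, ← prod_Ico_id_eq_factorial,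
    ← prod_Ico_consecutive _ hh hhm, Ico_add_one_right_eq_Icc]
  push_cast
  rfl

lemma prod_range_sub_self (k : ℕ) : ∏ a ∈ range k, ((a : ℝ) - k) = (-1) ^ k * k ! := by
  induction k with
  | zero => simp
  | succ k ih =>
    rw [prod_range_succ', factorial_succ]
    push_cast
    simp only [add_sub_add_right_eq_sub, ih]
    ring

lemma prod_Ico_sub_right (h k : ℕ) :
    ∏ j ∈ Ico h (h + k), ((j : ℝ) - (h + k : ℕ)) = (-1) ^ k * k ! := by
  rw [prod_Ico_eq_prod_range, Nat.add_sub_cancel_left, ← prod_range_sub_self]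
  push_cast
  simp only [add_sub_add_left_eq_sub]

lemma prod_Ioc_sub_left (i m : ℕ) : ∏ j ∈ Ioc i m, ((j : ℝ) - i) = (m - i)! := by
  rw [← Ico_add_one_add_one_eq_Ioc, prod_Ico_eq_prod_range, Nat.add_sub_add_right,
    ← prod_range_add_one_eq_factorial]
  push_cast
  congr! 1 with a
  ring

lemma natCast_mul_lagrangeCoeff_Icc {h k m : ℕ} (hh : 1 ≤ h) (hkm : h + k ≤ m) :
    ((h + k : ℕ) : ℝ) * lagrangeCoeff (Icc h m) (h + k) =
      (-1) ^ k * (h * m.choose h * (m - h).choose k) := by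
  set i := h + k
  have hi : i ∈ Icc h m := mem_Icc.2 ⟨by omega, hkm⟩
  have hsplit : (Icc h m).erase i = Ico h i ∪ Ioc i m := by
    ext j; simp only [mem_erase, mem_Icc, mem_union, mem_Ico, mem_Ioc]; omega
  have hdisj : Disjoint (Ico h i) (Ioc i m) :=
    disjoint_left.2 fun j hj hj' => by simp only [mem_Ico, mem_Ioc] at hj hj'; omega
  have hnum : ((h - 1)! : ℝ) * (i * ∏ j ∈ (Icc h m).erase i, (j : ℝ)) = m ! := by
    rw [mul_prod_erase _ _ hi]; exact factorial_mul_prod_Icc m hh (by omega)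
  have hden : ∏ j ∈ (Icc h m).erase i, ((j : ℝ) - i) = (-1) ^ k * k ! * (m - h - k)! := by
    rw [hsplit, prod_union hdisj, prod_Ico_sub_right, prod_Ioc_sub_left, Nat.sub_sub]
  have hm : (m.choose h : ℝ) * (h * (h - 1)!) * (m - h)! = m ! := by
    have := choose_mul_factorial_mul_factorial (by omega : h ≤ m)
    rw [← mul_factorial_pred (by omega : h ≠ 0)] at this
    exact_mod_cast this
  have hmh : ((m - h).choose k : ℝ) * k ! * (m - h - k)! = (m - h)! := by
    exact_mod_cast choose_mul_factorial_mul_factorial (by omega : k ≤ m - h)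
  have hsign : ((-1 : ℝ) ^ k) ^ 2 = 1 := by rw [← pow_mul, pow_mul', neg_one_sq, one_pow]
  rw [lagrangeCoeff, prod_div_distrib, hden, ← mul_div_assoc, div_eq_iff (by positivity)]
  apply mul_left_cancel₀ (show ((h - 1)! : ℝ) ≠ 0 by positivity)
  linear_combination hnum - hm - (h * (h - 1)! * m.choose h : ℝ) * hmh
    - (h * (h - 1)! * m.choose h * (m - h).choose k * k ! * (m - h - k)! : ℝ) * hsign

lemma sum_natCast_mul_lagrangeCoeff_mul_pow {h m : ℕ} (hh : 1 ≤ h) (hhm : h ≤ m) (u : ℝ) :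
    ∑ i ∈ Icc h m, (i : ℝ) * lagrangeCoeff (Icc h m) i * u ^ i =
      h * m.choose h * (u ^ h * (1 - u) ^ (m - h)) := by
  have hreindex : ∀ f : ℕ → ℝ, ∑ i ∈ Icc h m, f i = ∑ k ∈ range (m - h + 1), f (h + k) :=
    fun f => by rw [← Ico_add_one_right_eq_Icc, sum_Ico_eq_sum_range, Nat.sub_add_comm hhm]
  rw [hreindex, sub_eq_neg_add, add_pow, mul_sum, mul_sum]
  refine sum_congr rfl fun k hk => ?_
  rw [natCast_mul_lagrangeCoeff_Icc hh (by rw [mem_range] at hk; omega), neg_pow, pow_add]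
  ring

lemma hasDerivAt_sum_mul_exp (s : Finset ℕ) (c : ℕ → ℝ) (μ t : ℝ) :
    HasDerivAt (fun t => ∑ i ∈ s, c i * exp (-(i * μ) * t))
      (-μ * ∑ i ∈ s, i * c i * exp (-μ * t) ^ i) t := by
  have hsum := HasDerivAt.fun_sum fun i (_ : i ∈ s) =>
    (((hasDerivAt_id t).const_mul (-((i : ℝ) * μ))).exp).const_mul (c i)
  refine hsum.congr_deriv ?_
  rw [mul_sum]
  refine sum_congr rfl fun i _ => ?_
  rw [← exp_nat_mul]
  simp only [id, mul_one]
  ring_nf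

lemma hasDerivAt_sum_one_sub_exp_div {s : Finset ℕ} (c : ℕ → ℝ) {μ : ℝ}
    (hs : ∀ i ∈ s, (i : ℝ) * μ ≠ 0) (t : ℝ) :
    HasDerivAt (fun Δ => ∑ i ∈ s, (1 - exp (-(i * μ) * Δ)) / (i * μ) * c i)
      (∑ i ∈ s, c i * exp (-(i * μ) * t)) t := by
  refine HasDerivAt.fun_sum fun i hi => ?_
  refine (((((hasDerivAt_id t).const_mul (-((i : ℝ) * μ))).exp.const_sub 1).div_const
    ((i : ℝ) * μ)).mul_const (c i)).congr_deriv ?_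
  simp only [id, mul_one]
  rw [mul_neg, neg_neg, mul_div_assoc, div_self (hs i hi), mul_one, mul_comm]

lemma strictAntiOn_sum_lagrangeCoeff_mul_exp {h m : ℕ} (hh : 1 ≤ h) (hhm : h ≤ m) {μ : ℝ}
    (hμ : 0 < μ) :
    StrictAntiOn (fun t => ∑ i ∈ Icc h m, lagrangeCoeff (Icc h m) i * exp (-(i * μ) * t))
      (Set.Ioi 0) := by
  have hderiv := hasDerivAt_sum_mul_exp (Icc h m) (lagrangeCoeff (Icc h m)) μ
  refine strictAntiOn_of_hasDerivWithinAt_neg (convex_Ioi 0)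
    (fun t _ => (hderiv t).continuousAt.continuousWithinAt)
    (fun t _ => (hderiv t).hasDerivWithinAt) fun t ht => ?_
  rw [interior_Ioi, Set.mem_Ioi] at ht
  rw [sum_natCast_mul_lagrangeCoeff_mul_pow hh hhm]
  have hu : exp (-μ * t) < 1 := exp_lt_one_iff.2 (mul_neg_of_neg_of_pos (neg_neg_of_pos hμ) ht)
  have hbinom : 0 < (1 - exp (-μ * t)) ^ (m - h) := pow_pos (sub_pos.2 hu) _
  have hchoose : 0 < m.choose h := Nat.choose_pos hhm
  have hh' : (0 : ℝ) < h := by exact_mod_cast hh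
  rw [neg_mul]
  exact neg_neg_of_pos (by positivity)

lemma strictAntiOn_div_of_hasDerivAt {f G : ℝ → ℝ} (hG0 : G 0 = 0)
    (hG : ∀ x ∈ Set.Ici (0 : ℝ), HasDerivAt G (f x) x) (hf : StrictAntiOn f (Set.Ioi 0)) :
    StrictAntiOn (fun x => G x / x) (Set.Ioi 0) := by
  intro a ha b hb hab
  rw [Set.mem_Ioi] at ha hb
  have hcont : ContinuousOn G (Set.Ici 0) := fun x hx => (hG x hx).continuousAt.continuousWithinAt
  obtain ⟨ξ, hξ, hGa⟩ := exists_hasDerivAt_eq_slope G f ha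
    (hcont.mono Set.Icc_subset_Ici_self) fun x hx => hG x hx.1.le
  obtain ⟨η, hη, hGb⟩ := exists_hasDerivAt_eq_slope G f hab
    (hcont.mono (Set.Icc_subset_Ici_iff hab.le |>.2 ha.le)) fun x hx => hG x (ha.le.trans hx.1.le)
  have hslope : f η < f ξ := hf hξ.1 (ha.trans hη.1) (hξ.2.trans hη.1)
  rw [hG0, sub_zero, sub_zero, eq_div_iff ha.ne'] at hGa
  rw [eq_div_iff (sub_pos.2 hab).ne'] at hGb
  rw [div_lt_div_iff₀ hb ha]
  nlinarith [mul_lt_mul_of_pos_left hslope (mul_pos ha (sub_pos.2 hab))]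

theorem download_cost_monotone_general (M ω F α ρBS ρD2D μ : ℝ)
    (hM : 0 < M) (hω : 0 < ω)
    (hρD2D : 0 < ρD2D) (hμ : 0 < μ)
    (h m : ℕ) (h1 : 1 ≤ h) (hhm : h ≤ m)
    (pD2D Cd : ℝ → ℝ)
    (hp : ∀ Δ, pD2D Δ = (1 / Δ) * ∑ i ∈ Finset.Icc h m,
        (1 - Real.exp (-((i : ℝ) * μ) * Δ)) / ((i : ℝ) * μ) *
          ∏ j ∈ (Finset.Icc h m).erase i, (j : ℝ) / ((j : ℝ) - (i : ℝ)))
    (hCd : ∀ Δ, Cd Δ = M * ω * (ρBS + (ρD2D * (h * α) / F - ρBS) * pD2D Δ)) :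
    (ρBS / ρD2D > h * α / F → StrictMonoOn Cd (Set.Ioi 0)) ∧
    (ρBS / ρD2D < h * α / F → StrictAntiOn Cd (Set.Ioi 0)) ∧
    (ρBS / ρD2D = h * α / F → ∀ Δ₁ ∈ Set.Ioi (0 : ℝ), ∀ Δ₂ ∈ Set.Ioi (0 : ℝ),
      Cd Δ₁ = Cd Δ₂) := by
  have hp_anti : StrictAntiOn pD2D (Set.Ioi 0) := by
    have hnodes : ∀ i ∈ Icc h m, (i : ℝ) * μ ≠ 0 := fun i hi => by
      have : 1 ≤ i := h1.trans (mem_Icc.1 hi).1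
      positivity
    rw [show pD2D = fun Δ => (∑ i ∈ Icc h m, (1 - exp (-(i * μ) * Δ)) / (i * μ) *
        lagrangeCoeff (Icc h m) i) / Δ from funext fun Δ => by rw [hp, one_div_mul_eq_div]; rfl]
    exact strictAntiOn_div_of_hasDerivAt (by simp)
      (fun t _ => hasDerivAt_sum_one_sub_exp_div _ hnodes t)
      (strictAntiOn_sum_lagrangeCoeff_mul_exp h1 hhm hμ)
  have hcoeff : ρD2D * (h * α) / F - ρBS = ρD2D * (h * α / F - ρBS / ρD2D) := by
    rw [mul_sub, mul_div_cancel₀ _ hρD2D.ne', mul_div_assoc]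
  have hCd_affine : ∀ Δ, Cd Δ = M * ω * ρBS + M * ω * ρD2D * (h * α / F - ρBS / ρD2D) * pD2D Δ :=
    fun Δ => by rw [hCd, hcoeff]; ring
  refine ⟨fun hgt a ha b hb hab => ?_, fun hlt a ha b hb hab => ?_, fun heq Δ₁ _ Δ₂ _ => ?_⟩
  · have := mul_lt_mul_of_neg_left (hp_anti ha hb hab)
      (mul_neg_of_pos_of_neg (by positivity) (sub_neg.2 hgt) : M * ω * ρD2D * _ < 0)
    rw [hCd_affine, hCd_affine]
    linarith
  · have := mul_lt_mul_of_pos_left (hp_anti ha hb hab)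
      (mul_pos (by positivity) (sub_pos.2 hlt) : 0 < M * ω * ρD2D * _)
    rw [hCd_affine, hCd_affine]
    linarith
  · simp only [hCd_affine, heq, sub_self, mul_zero, zero_mul]

/-- The download cost `C_d(Δ) = Mω(ρ_BS + (ρ_D2D·hα/F − ρ_BS)·p_D2D(Δ))` is strictly
increasing in `Δ` on `(0,∞)` when `ρ_BS/ρ_D2D > hα/F`, strictly decreasing when
`ρ_BS/ρ_D2D < hα/F`, and constant when equality holds (for `μ > 0`). -/
theorem download_cost_monotone (M ω F α ρBS ρD2D μ : ℝ)
    (hM : 0 < M) (hω : 0 < ω) (hF : 0 < F) (hα : 0 < α)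
    (hρBS : 0 < ρBS) (hρD2D : 0 < ρD2D) (hμ : 0 < μ)
    (h m : ℕ) (h1 : 1 ≤ h) (hhm : h ≤ m)
    (pD2D Cd : ℝ → ℝ)
    (hp : ∀ Δ, pD2D Δ = (1 / Δ) * ∑ i ∈ Finset.Icc h m,
        (1 - Real.exp (-((i : ℝ) * μ) * Δ)) / ((i : ℝ) * μ) *
          ∏ j ∈ (Finset.Icc h m).erase i, (j : ℝ) / ((j : ℝ) - (i : ℝ)))
    (hCd : ∀ Δ, Cd Δ = M * ω * (ρBS + (ρD2D * (h * α) / F - ρBS) * pD2D Δ)) :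
    (ρBS / ρD2D > h * α / F → StrictMonoOn Cd (Set.Ioi 0)) ∧
    (ρBS / ρD2D < h * α / F → StrictAntiOn Cd (Set.Ioi 0)) ∧
    (ρBS / ρD2D = h * α / F → ∀ Δ₁ ∈ Set.Ioi (0 : ℝ), ∀ Δ₂ ∈ Set.Ioi (0 : ℝ),
      Cd Δ₁ = Cd Δ₂) :=
  download_cost_monotone_general M ω F α ρBS ρD2D μ hM hω hρD2D hμ h m h1 hhm pD2D Cd hp hCd
end

section
/- For any [m,h,r] linear code with m = n, minimum distance d ≥ 2, α = F/k, β = α, γ_D2D = rα, and satisfying the locality Singleton bound d ≤ n − k − ⌈k/r⌉ + 2 with h ≥ k and d = m − h + 1, the instantaneous-repair cost (ρ_D2D/F)(γ_D2D m μ + Mω h α) is at least ρ_D2D(2μ + Mω), with equality achieved by 2-replication (m = 2, k = h = r = 1, α = F). -/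
/-!
With `α = F / k` the cost is `ρ_D2D (r m / k · μ + M ω · h / k)`. Since `d ≥ 2`, the locality
Singleton bound forces `m ≥ k + ⌈k / r⌉`, hence `r m ≥ r k + k ≥ 2 k`; together with `h ≥ k`
each term dominates the corresponding term of the 2-replication cost `ρ_D2D (2 μ + M ω)`.
-/

lemma le_mul_ceil_div {k r : ℕ} (hr : 0 < r) : (k : ℤ) ≤ r * ⌈(k : ℝ) / r⌉ := by
  have hr' : (0 : ℝ) < r := by exact_mod_cast hr
  have : (k : ℝ) ≤ r * ⌈(k : ℝ) / r⌉ := by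
    rw [← div_le_iff₀' hr']
    exact Int.le_ceil _
  exact_mod_cast this

lemma two_mul_le_mul_of_add_ceil_div_le {k r m : ℕ} (hr : 1 ≤ r)
    (hm : (k : ℤ) + ⌈(k : ℝ) / r⌉ ≤ m) : 2 * k ≤ r * m := by
  have hceil := le_mul_ceil_div (k := k) hr
  have hr' : (1 : ℤ) ≤ r := by exact_mod_cast hr
  have : (2 * k : ℤ) ≤ r * m := by
    nlinarith [mul_le_mul_of_nonneg_left hm (by positivity : (0 : ℤ) ≤ r)]
  exact_mod_cast this

lemma instantaneous_cost_eq (ρ F μ c r m h : ℝ) {k : ℝ} (hF : F ≠ 0) (hk : k ≠ 0) :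
    ρ / F * (r * (F / k) * m * μ + c * (h * (F / k))) = ρ * (r * m / k * μ + c * (h / k)) := by
  field_simp

theorem instantaneous_cost_lower_bound_general (μ M ω ρD2D F : ℝ)
    (hμ : 0 < μ) (hM : 0 < M) (hω : 0 < ω) (hρ : 0 < ρD2D) (hF : 0 < F)
    (m k h r d : ℕ) (hk : 1 ≤ k) (hr : 1 ≤ r) (hhk : k ≤ h)
    (hd2 : 2 ≤ d)
    (hSingleton : (d : ℤ) ≤ (m : ℤ) - k - ⌈(k : ℝ) / (r : ℝ)⌉ + 2)
    (α γ : ℝ) (hα : α = F / k) (hγ : γ = r * α) :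
    ρD2D * (2 * μ + M * ω) ≤ ρD2D / F * (γ * m * μ + M * ω * (h * α)) ∧
    (m = 2 ∧ k = 1 ∧ h = 1 ∧ r = 1 →
      ρD2D / F * (γ * m * μ + M * ω * (h * α)) = ρD2D * (2 * μ + M * ω)) := by
  have hk0 : (0 : ℝ) < k := by exact_mod_cast hk
  subst hγ hα
  rw [instantaneous_cost_eq _ _ _ _ _ _ _ hF.ne' hk0.ne']
  refine ⟨?_, ?_⟩
  · have hrm : 2 ≤ (r * m : ℝ) / k := by
      rw [le_div_iff₀ hk0]
      exact_mod_cast two_mul_le_mul_of_add_ceil_div_le hr (by omega)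
    have hhk' : 1 ≤ (h : ℝ) / k := by
      rw [one_le_div hk0]
      exact_mod_cast hhk
    gcongr ρD2D * (?_ + ?_)
    · exact mul_le_mul_of_nonneg_right hrm hμ.le
    · exact le_mul_of_one_le_right (by positivity) hhk'
  · rintro ⟨rfl, rfl, rfl, rfl⟩
    norm_num

/-- For any `[m,h,r]` linear code with `m = n`, minimum distance `d ≥ 2`, `α = F/k`,
`β = α`, `γ_D2D = rα`, satisfying the locality Singleton bound `d ≤ n − k − ⌈k/r⌉ + 2` with
`h ≥ k` and `d = m − h + 1`, the instantaneous-repair cost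
`(ρ_D2D/F)(γ_D2D m μ + Mω h α)` is at least `ρ_D2D(2μ + Mω)`, with equality achieved by
2-replication (`m = 2`, `k = h = r = 1`, `α = F`). -/
theorem instantaneous_cost_lower_bound (μ M ω ρD2D F : ℝ)
    (hμ : 0 < μ) (hM : 0 < M) (hω : 0 < ω) (hρ : 0 < ρD2D) (hF : 0 < F)
    (m k h r d : ℕ) (hk : 1 ≤ k) (hr : 1 ≤ r) (hhk : k ≤ h) (hhm : h ≤ m)
    (hd : d = m - h + 1) (hd2 : 2 ≤ d)
    (hSingleton : (d : ℤ) ≤ (m : ℤ) - k - ⌈(k : ℝ) / (r : ℝ)⌉ + 2)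
    (α β γ : ℝ) (hα : α = F / k) (hβ : β = α) (hγ : γ = r * α) :
    ρD2D * (2 * μ + M * ω) ≤ ρD2D / F * (γ * m * μ + M * ω * (h * α)) ∧
    (m = 2 ∧ k = 1 ∧ h = 1 ∧ r = 1 →
      ρD2D / F * (γ * m * μ + M * ω * (h * α)) = ρD2D * (2 * μ + M * ω)) :=
  instantaneous_cost_lower_bound_general μ M ω ρD2D F hμ hM hω hρ hF m k h r d hk hr hhk hd2
    hSingleton α γ hα hγ
end

section
/- For r = m−1, the quantity m·γ_D2D for an MSR code, namely m·(F/h)·(m−1)/(m−h), subject to real constraints m ≥ 2, 1 ≤ h < m, is minimized at m = 2, h = 1 with minimum value 2F; simultaneously hα = F, so the overall instantaneous cost (ρ_D2D/F)(γ m μ + Mω h α) attains its minimum ρ_D2D(2μ + Mω) at 2-replication. -/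
/-! The MSR repair cost `m·γ = F·m(m−1)/(h(m−h))` is at least `2F` because
`2·(m(m−1) − 2h(m−h)) = (m−2h)² + m(m−2) ≥ 0` once `m ≥ 2`, with equality at `m = 2`, `h = 1`.
Since `h·α = F`, the storage term `Mω·hα` does not depend on `(m, h)`, so the instantaneous cost
is minimized exactly where `m·γ` is. -/

lemma two_mul_mul_sub_le_mul_sub_one {m : ℝ} (hm : 2 ≤ m) (h : ℝ) :
    2 * h * (m - h) ≤ m * (m - 1) := by
  nlinarith [sq_nonneg (m - 2 * h)]

lemma two_mul_le_msr_repair_cost {F m h : ℝ} (hF : 0 ≤ F) (hm : 2 ≤ m) (hh : 0 < h)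
    (hhm : h < m) : 2 * F ≤ m * (F / h * ((m - 1) / (m - h))) := by
  have hmh : 0 < m - h := sub_pos.mpr hhm
  calc 2 * F = F * (2 * h * (m - h)) / (h * (m - h)) := by field_simp
    _ ≤ F * (m * (m - 1)) / (h * (m - h)) := by
        gcongr F * ?_ / _
        exact two_mul_mul_sub_le_mul_sub_one hm h
    _ = m * (F / h * ((m - 1) / (m - h))) := by field_simp

lemma instantaneous_cost_le {F μ M ω ρ γ m : ℝ} (hF : 0 < F) (hμ : 0 ≤ μ) (hρ : 0 ≤ ρ)
    (hγ : 2 * F ≤ m * γ) : ρ * (2 * μ + M * ω) ≤ ρ / F * (γ * m * μ + M * ω * F) := by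
  calc ρ * (2 * μ + M * ω) = ρ / F * (2 * F * μ + M * ω * F) := by field_simp
    _ ≤ ρ / F * (γ * m * μ + M * ω * F) := by
        gcongr _ * (?_ + _)
        calc 2 * F * μ ≤ m * γ * μ := by gcongr
          _ = γ * m * μ := by ring

theorem msr_instantaneous_min_general (F μ M ω ρD2D : ℝ)
    (hF : 0 < F) (hμ : 0 < μ) (hρ : 0 < ρD2D) :
    (∀ m h : ℝ, 2 ≤ m → 1 ≤ h → h < m →
      2 * F ≤ m * (F / h * ((m - 1) / (m - h))) ∧
      h * (F / h) = F ∧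
      ρD2D * (2 * μ + M * ω) ≤
        ρD2D / F * ((F / h * ((m - 1) / (m - h))) * m * μ + M * ω * (h * (F / h)))) ∧
    ((2 : ℝ) * (F / 1 * (((2 : ℝ) - 1) / ((2 : ℝ) - 1))) = 2 * F) ∧
    (ρD2D / F * ((F / 1 * (((2 : ℝ) - 1) / ((2 : ℝ) - 1))) * 2 * μ +
        M * ω * ((1 : ℝ) * (F / 1))) = ρD2D * (2 * μ + M * ω)) := by
  refine ⟨fun m h hm hh hhm => ?_, by norm_num, by field_simp⟩
  have hh0 : 0 < h := by linarith
  have hcost := two_mul_le_msr_repair_cost hF.le hm hh0 hhm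
  have hα : h * (F / h) = F := mul_div_cancel₀ F hh0.ne'
  refine ⟨hcost, hα, ?_⟩
  rw [hα]
  exact instantaneous_cost_le hF hμ.le hρ.le hcost

/-- For `r = m−1`, the quantity `m·γ_D2D` for an MSR code, namely `m·(F/h)·(m−1)/(m−h)`,
subject to real constraints `m ≥ 2`, `1 ≤ h < m`, is minimized at `m = 2, h = 1` with minimum
value `2F`; simultaneously `hα = F`, so the overall instantaneous cost
`(ρ_D2D/F)(γ m μ + Mω h α)` attains its minimum `ρ_D2D(2μ + Mω)` at 2-replication. -/
theorem msr_instantaneous_min (F μ M ω ρD2D : ℝ)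
    (hF : 0 < F) (hμ : 0 < μ) (hM : 0 < M) (hω : 0 < ω) (hρ : 0 < ρD2D) :
    (∀ m h : ℝ, 2 ≤ m → 1 ≤ h → h < m →
      2 * F ≤ m * (F / h * ((m - 1) / (m - h))) ∧
      h * (F / h) = F ∧
      ρD2D * (2 * μ + M * ω) ≤
        ρD2D / F * ((F / h * ((m - 1) / (m - h))) * m * μ + M * ω * (h * (F / h)))) ∧
    ((2 : ℝ) * (F / 1 * (((2 : ℝ) - 1) / ((2 : ℝ) - 1))) = 2 * F) ∧
    (ρD2D / F * ((F / 1 * (((2 : ℝ) - 1) / ((2 : ℝ) - 1))) * 2 * μ +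
        M * ω * ((1 : ℝ) * (F / 1))) = ρD2D * (2 * μ + M * ω)) :=
  msr_instantaneous_min_general F μ M ω ρD2D hF hμ hρ
end
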